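/- For any 0 ≤ Q ≤ 1, the function f(x) = 1 + φ(√(Q + (1-Q)(1-x²))) - φ(√(1-x²)) is monotonically decreasing in x on [0,1]. -/

import Mathlib

noncomputable def phi (x : ℝ) : ℝ :=
  1 - (1/2) * (1 + x) * Real.logb 2 (1 + x) - (1/2) * (1 - x) * Real.logb 2 (1 - x)

/-! Put `ψ t = phi √t` and `a = Q + (1 - Q) t`, so that `t ≤ a` and `1 - a = (1 - Q)(1 - t)`.
With `t = 1 - x ^ 2` it suffices that `t ↦ ψ t - ψ a` is antitone on `[0, 1]`. Multiplying its
derivative `ψ' t - (1 - Q) ψ' a` by `1 - t > 0` gives `(1 - t) ψ' t - (1 - a) ψ' a`, which is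
nonpositive once `t ↦ (1 - t) ψ' t` is monotone. Since `ψ' t = -artanh √t / (2 log 2 √t)`, this
is the antitonicity of `s ↦ (s⁻¹ - s) artanh s` on `(0, 1)`, whose derivative
`s⁻¹ - (s⁻² + 1) artanh s` is nonpositive because `s ≤ artanh s`. -/

open Real Set

namespace Real

theorem sqrt_mem_Ioo_zero_one {t : ℝ} (ht : t ∈ Ioo 0 1) : √t ∈ Ioo 0 1 :=
  ⟨sqrt_pos.2 ht.1, (sqrt_lt' one_pos).2 (by simpa using ht.2)⟩

theorem artanh_eq_log_sub_log {x : ℝ} (hx : x ∈ Ioo (-1) 1) :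
    artanh x = (log (1 + x) - log (1 - x)) / 2 := by
  rw [artanh_eq_half_log (Ioo_subset_Icc_self hx),
    log_div (by linarith [hx.1]) (by linarith [hx.2])]
  ring

theorem hasDerivAt_artanh {x : ℝ} (hx : x ∈ Ioo (-1) 1) :
    HasDerivAt artanh (1 - x ^ 2)⁻¹ x := by
  have hp : 1 + x ≠ 0 := by linarith [hx.1]
  have hm : 1 - x ≠ 0 := by linarith [hx.2]
  have hlog := ((((hasDerivAt_id' x).const_add 1).log hp).sub
    (((hasDerivAt_id' x).const_sub 1).log hm)).div_const 2
  refine (hlog.congr_of_eventuallyEq ?_).congr_deriv ?_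
  · filter_upwards [isOpen_Ioo.mem_nhds hx] with y hy using artanh_eq_log_sub_log hy
  · have : 1 - x ^ 2 = (1 + x) * (1 - x) := by ring
    rw [this]
    field_simp
    ring

theorem le_artanh {x : ℝ} (h₀ : 0 ≤ x) (h₁ : x < 1) : x ≤ artanh x := by
  have hsum := hasSum_log_sub_log_of_abs_lt_one (abs_lt.2 ⟨by linarith, h₁⟩)
  have := le_hasSum hsum 0 fun k _ => by positivity
  rw [artanh_eq_log_sub_log ⟨by linarith, h₁⟩]
  norm_num at this
  linarith

theorem antitoneOn_inv_sub_mul_artanh :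
    AntitoneOn (fun s => (s⁻¹ - s) * artanh s) (Ioo 0 1) := by
  have hderiv : ∀ s ∈ Ioo (0 : ℝ) 1, HasDerivAt (fun s => (s⁻¹ - s) * artanh s)
      (s⁻¹ - (s⁻¹ ^ 2 + 1) * artanh s) s := by
    intro s ⟨h₀, h₁⟩
    refine (((hasDerivAt_inv h₀.ne').sub (hasDerivAt_id' s)).mul
      (hasDerivAt_artanh ⟨by linarith, h₁⟩)).congr_deriv ?_
    have : 1 - s ^ 2 ≠ 0 := by nlinarith
    simp only [Pi.sub_apply]
    field_simp
    ring
  refine antitoneOn_of_hasDerivWithinAt_nonpos (convex_Ioo 0 1)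
    (fun s hs => (hderiv s hs).continuousAt.continuousWithinAt)
    (fun s hs => (hderiv s (interior_subset hs)).hasDerivWithinAt) ?_
  rw [interior_Ioo]
  intro s ⟨h₀, h₁⟩
  have : s⁻¹ ≤ s⁻¹ ^ 2 * artanh s :=
    calc s⁻¹ = s⁻¹ ^ 2 * s := by field_simp
      _ ≤ s⁻¹ ^ 2 * artanh s := by gcongr; exact le_artanh h₀.le h₁
  linarith [artanh_nonneg h₀.le]

end Real

theorem antitoneOn_sub_comp_affine {ψ ψ' : ℝ → ℝ} {Q : ℝ} (hQ₀ : 0 ≤ Q) (hQ₁ : Q ≤ 1)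
    (hψ : ContinuousOn ψ (Icc 0 1)) (hψ' : ∀ t ∈ Ioo 0 1, HasDerivAt ψ (ψ' t) t)
    (hψ'_nonpos : ∀ t ∈ Ioo 0 1, ψ' t ≤ 0)
    (hmono : MonotoneOn (fun t => (1 - t) * ψ' t) (Ioo 0 1)) :
    AntitoneOn (fun t => ψ t - ψ (Q + (1 - Q) * t)) (Icc 0 1) := by
  rcases hQ₁.eq_or_lt with rfl | hQ₁
  · have hanti : AntitoneOn ψ (Icc 0 1) :=
      antitoneOn_of_hasDerivWithinAt_nonpos (convex_Icc 0 1) hψ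
        (fun t ht => (hψ' t (by rwa [interior_Icc] at ht)).hasDerivWithinAt)
        (by rwa [interior_Icc])
    intro t ht u hu htu
    simpa using hanti ht hu htu
  have haff : MapsTo (fun t => Q + (1 - Q) * t) (Ioo 0 1) (Ioo 0 1) := fun t ⟨h₀, h₁⟩ =>
    ⟨by nlinarith, by nlinarith⟩
  have hderiv : ∀ t ∈ Ioo 0 1, HasDerivAt (fun t => ψ t - ψ (Q + (1 - Q) * t))
      (ψ' t - (1 - Q) * ψ' (Q + (1 - Q) * t)) t := by
    intro t ht
    have hinner : HasDerivAt (fun t => Q + (1 - Q) * t) (1 - Q) t := by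
      simpa using ((hasDerivAt_id t).const_mul (1 - Q)).const_add Q
    exact ((hψ' t ht).sub ((hψ' _ (haff ht)).comp t hinner)).congr_deriv (by ring)
  refine antitoneOn_of_hasDerivWithinAt_nonpos (convex_Icc 0 1)
    (hψ.sub (hψ.comp (by fun_prop) fun t ⟨h₀, h₁⟩ => ⟨by nlinarith, by nlinarith⟩))
    (fun t ht => (hderiv t (by rwa [interior_Icc] at ht)).hasDerivWithinAt) ?_
  rw [interior_Icc]
  intro t ht
  have hcmp := hmono ht (haff ht) (by nlinarith [ht.2])
  refine nonpos_of_mul_nonpos_right ?_ (sub_pos.2 ht.2)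
  calc (1 - t) * (ψ' t - (1 - Q) * ψ' (Q + (1 - Q) * t))
      = (1 - t) * ψ' t - (1 - (Q + (1 - Q) * t)) * ψ' (Q + (1 - Q) * t) := by ring
    _ ≤ 0 := sub_nonpos.2 hcmp

theorem phi_eq_log (x : ℝ) :
    phi x = 1 - ((1 + x) * log (1 + x) + (1 - x) * log (1 - x)) / (2 * log 2) := by
  have : log 2 ≠ 0 := (log_pos one_lt_two).ne'
  simp only [phi, logb]
  field_simp
  ring

theorem continuous_phi : Continuous phi := by
  rw [show phi = _ from funext phi_eq_log]
  exact continuous_const.sub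
    (((continuous_mul_log.comp (continuous_const.add continuous_id)).add
      (continuous_mul_log.comp (continuous_const.sub continuous_id))).div_const _)

theorem hasDerivAt_phi {x : ℝ} (hx : x ∈ Ioo (-1) 1) :
    HasDerivAt phi (-artanh x / log 2) x := by
  have hp : 1 + x ≠ 0 := by linarith [hx.1]
  have hm : 1 - x ≠ 0 := by linarith [hx.2]
  have hmul₁ := (hasDerivAt_mul_log hp).comp x ((hasDerivAt_id' x).const_add 1)
  have hmul₂ := (hasDerivAt_mul_log hm).comp x ((hasDerivAt_id' x).const_sub 1)
  rw [show phi = _ from funext phi_eq_log]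
  refine (((hmul₁.add hmul₂).div_const (2 * log 2)).const_sub 1).congr_deriv ?_
  rw [artanh_eq_log_sub_log hx]
  field_simp
  ring

theorem hasDerivAt_phi_sqrt {t : ℝ} (ht : t ∈ Ioo 0 1) :
    HasDerivAt (fun t => phi √t) (-artanh √t / (2 * log 2 * √t)) t := by
  have hs := sqrt_mem_Ioo_zero_one ht
  refine ((hasDerivAt_phi ⟨by linarith [hs.1], hs.2⟩).comp t
    (hasDerivAt_sqrt ht.1.ne')).congr_deriv ?_
  field_simp

theorem monotoneOn_one_sub_mul_deriv_phi_sqrt :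
    MonotoneOn (fun t => (1 - t) * (-artanh √t / (2 * log 2 * √t))) (Ioo 0 1) := by
  have hL : 0 < log 2 := log_pos one_lt_two
  have hform : ∀ t ∈ Ioo (0 : ℝ) 1, (1 - t) * (-artanh √t / (2 * log 2 * √t))
      = -(((√t)⁻¹ - √t) * artanh √t) / (2 * log 2) := by
    intro t ht
    have hs : 0 < √t := sqrt_pos.2 ht.1
    have hsq : √t ^ 2 = t := sq_sqrt ht.1.le
    field_simp
    rw [hsq]
    ring
  intro t ht u hu htu
  simp only [hform t ht, hform u hu]
  gcongr -?_ / _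
  exact antitoneOn_inv_sub_mul_artanh (sqrt_mem_Ioo_zero_one ht) (sqrt_mem_Ioo_zero_one hu)
    (sqrt_le_sqrt htu)

theorem stmt_3 (Q : ℝ) (hQ0 : 0 ≤ Q) (hQ1 : Q ≤ 1) :
    AntitoneOn
      (fun x : ℝ => 1 + phi (Real.sqrt (Q + (1 - Q) * (1 - x^2))) - phi (Real.sqrt (1 - x^2)))
      (Set.Icc 0 1) := by
  have hanti := antitoneOn_sub_comp_affine (ψ := fun t => phi √t) hQ0 hQ1
    (continuous_phi.comp continuous_sqrt).continuousOn (fun t ht => hasDerivAt_phi_sqrt ht)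
    (fun t _ => div_nonpos_of_nonpos_of_nonneg (neg_nonpos.2 (artanh_nonneg (sqrt_nonneg t)))
      (by positivity))
    monotoneOn_one_sub_mul_deriv_phi_sqrt
  intro x hx y hy hxy
  have hmem : ∀ z ∈ Icc (0 : ℝ) 1, 1 - z ^ 2 ∈ Icc (0 : ℝ) 1 := fun z ⟨h₀, h₁⟩ =>
    ⟨by nlinarith, by nlinarith⟩
  have := hanti (hmem y hy) (hmem x hx) (by nlinarith [hx.1])
  simp only at this ⊢
  linarith
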